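/- Let S_1, ..., S_{n+1} be exchangeable random variables with almost surely distinct values, and let q̂ be the ⌈(1-α)(n+1)⌉-th smallest value among S_1, ..., S_n (with q̂ = +∞ if ⌈(1-α)(n+1)⌉ > n). Then P(S_{n+1} ≤ q̂) ≥ 1 - α. -/

import Mathlib

/-!
By exchangeability, the events `{rank of S_j among S_1, …, S_{n+1} is ≤ k}` all have the same
probability. Almost surely the scores are distinct, so the ranks are a permutation of
`1, …, n+1` and exactly `k` of these events occur; hence each has probability `k / (n+1)`,
which is `≥ 1 - α` for `k = ⌈(1-α)(n+1)⌉`. Finally, if `S_{n+1}` has rank `≤ k`, fewer than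
`k` calibration scores lie below it, so it is at most their `k`-th smallest value.
-/

open MeasureTheory Finset

theorem List.le_getD_insertionSort_of_countP_le {α : Type*} [LinearOrder α] {l : List α}
    {x : α} {m : ℕ} (d : α) (hm : m < l.length) (h : l.countP (· ≤ x) ≤ m) :
    x ≤ (l.insertionSort (· ≤ ·)).getD m d := by
  set l' := l.insertionSort (· ≤ ·)
  have hm' : m < l'.length := by rwa [List.length_insertionSort]
  rw [List.getD_eq_getElem l' d hm']
  -- otherwise the `m + 1` smallest elements of `l` are all `< x`
  by_contra! hlt
  have hprefix : (l'.take (m + 1)).countP (· ≤ x) = m + 1 := by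
    rw [List.countP_eq_length.mpr, List.length_take_of_le hm']
    intro a ha
    obtain ⟨i, hi, rfl⟩ := List.mem_iff_getElem.mp ha
    rw [List.getElem_take]
    have hi' : i ≤ m := by simp at hi; omega
    simpa using ((List.sortedLE_insertionSort).getElem_le_getElem_of_le hi').trans hlt.le
  have := (List.take_sublist (m + 1) l').countP_le (p := (· ≤ x))
  rw [hprefix, (List.perm_insertionSort _ l).countP_eq] at this
  omega

theorem List.countP_ofFn {α : Type*} {n : ℕ} (g : Fin n → α) (p : α → Prop)
    [DecidablePred p] : (List.ofFn g).countP (fun a => p a) = #{i | p (g i)} := by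
  rw [← Multiset.coe_countP, ← Fin.univ_val_map, Multiset.countP_map]
  rfl

theorem measure_preimage_perm_eq {ι Ω β : Type*} [MeasurableSpace Ω] [MeasurableSpace β]
    {μ : Measure Ω} {S : ι → Ω → β}
    (hmeas : ∀ i, Measurable (S i)) {σ : Equiv.Perm ι}
    (hexch : μ.map (fun ω i => S (σ i) ω) = μ.map (fun ω i => S i ω))
    {A : Set (ι → β)} (hA : MeasurableSet A) :
    μ ((fun ω i => S (σ i) ω) ⁻¹' A) = μ ((fun ω i => S i ω) ⁻¹' A) := by
  rw [← Measure.map_apply (measurable_pi_lambda _ fun i => hmeas (σ i)) hA, hexch,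
    Measure.map_apply (measurable_pi_lambda _ hmeas) hA]

open scoped Classical in
theorem sum_measure_eq_of_ae_card_eq {ι Ω : Type*} [Fintype ι] [MeasurableSpace Ω]
    {μ : Measure Ω} {E : ι → Set Ω} (hE : ∀ j, MeasurableSet (E j))
    {k : ℕ} (h : ∀ᵐ ω ∂μ, #{j | ω ∈ E j} = k) : ∑ j, μ (E j) = k * μ Set.univ := by
  calc ∑ j, μ (E j) = ∑ j, ∫⁻ ω, (E j).indicator 1 ω ∂μ := by
        simp only [lintegral_indicator_one (hE _)]
    _ = ∫⁻ ω, ∑ j, (E j).indicator 1 ω ∂μ :=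
        (lintegral_finsetSum _ fun j _ => measurable_one.indicator (hE j)).symm
    _ = ∫⁻ _, (k : ENNReal) ∂μ := lintegral_congr_ae <| h.mono fun ω hω => by
        simp only [Set.indicator_apply, Pi.one_apply, sum_boole, hω]
    _ = k * μ Set.univ := lintegral_const _

namespace SplitConformal

variable {ι α : Type*} [Fintype ι] [LinearOrder α]

def rank (f : ι → α) (j : ι) : ℕ := #{i | f i ≤ f j}

theorem one_le_rank (f : ι → α) (j : ι) : 1 ≤ rank f j :=
  card_pos.mpr ⟨j, by simp⟩

theorem rank_le_card (f : ι → α) (j : ι) : rank f j ≤ Fintype.card ι :=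
  card_filter_le _ _

theorem rank_lt_rank {f : ι → α} {i j : ι} (h : f i < f j) : rank f i < rank f j :=
  card_lt_card <| (ssubset_iff_of_subset fun l hl => by
    simp only [mem_filter, mem_univ, true_and] at hl ⊢; exact hl.trans h.le).2
    ⟨j, by simp, by simpa using h⟩

theorem rank_injective {f : ι → α} (hf : Function.Injective f) :
    Function.Injective (rank f) := by
  intro i j hij
  apply hf
  by_contra hne
  rcases lt_or_gt_of_ne hne with hlt | hlt
  · exact (rank_lt_rank hlt).ne hij
  · exact (rank_lt_rank hlt).ne' hij

theorem image_rank {f : ι → α} (hf : Function.Injective f) :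
    univ.image (rank f) = Icc 1 (Fintype.card ι) :=
  eq_of_subset_of_card_le
    (fun r hr => by
      obtain ⟨j, -, rfl⟩ := mem_image.mp hr
      exact mem_Icc.mpr ⟨one_le_rank f j, rank_le_card f j⟩)
    (by simp [card_image_of_injective _ (rank_injective hf)])

theorem card_rank_le {f : ι → α} (hf : Function.Injective f) {k : ℕ}
    (hk : k ≤ Fintype.card ι) : #{j | rank f j ≤ k} = k := by
  rw [← card_image_of_injective _ (rank_injective hf), ← filter_image (p := (· ≤ k)),
    image_rank hf, show {r ∈ Icc 1 (Fintype.card ι) | r ≤ k} = Icc 1 k by ext; simp; omega]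
  simp

theorem rank_comp_perm (f : ι → α) (σ : Equiv.Perm ι) (j : ι) :
    rank (f ∘ σ) j = rank f (σ j) := by
  simp only [rank, card_filter, Function.comp_apply]
  exact Equiv.sum_comp σ fun i => if f i ≤ f (σ j) then 1 else 0

theorem rank_last {n : ℕ} (f : Fin (n + 1) → α) :
    rank f (Fin.last n)
      = (List.ofFn fun i : Fin n => f i.castSucc).countP (· ≤ f (Fin.last n)) + 1 := by
  rw [List.countP_ofFn, rank, card_filter, Fin.sum_univ_castSucc, ← card_filter, if_pos le_rfl]

theorem le_getD_insertionSort_of_rank_last_le {n k : ℕ} {f : Fin (n + 1) → α} (d : α)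
    (hk : k ≤ n) (h : rank f (Fin.last n) ≤ k) :
    f (Fin.last n) ≤ ((List.ofFn fun i : Fin n => f i.castSucc).insertionSort (· ≤ ·)).getD
      (k - 1) d := by
  rw [rank_last] at h
  exact List.le_getD_insertionSort_of_countP_le d (by simp; omega) (by omega)

section Exchangeable

variable {Ω : Type*} [MeasurableSpace Ω] {μ : Measure Ω} {S : ι → Ω → ℝ}

theorem measurable_rank (j : ι) : Measurable fun f : ι → ℝ => rank f j := by
  simp only [rank, card_filter]
  exact Finset.measurable_sum _ fun i _ => Measurable.ite
    (measurableSet_le (measurable_pi_apply i) (measurable_pi_apply j)) measurable_const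
    measurable_const

theorem measure_rank_le_eq [DecidableEq ι] (hmeas : ∀ i, Measurable (S i))
    (hexch : ∀ σ : Equiv.Perm ι,
      μ.map (fun ω i => S (σ i) ω) = μ.map (fun ω i => S i ω)) (k : ℕ) (i j : ι) :
    μ {ω | rank (fun l => S l ω) i ≤ k} = μ {ω | rank (fun l => S l ω) j ≤ k} := by
  have hcomp (ω : Ω) : rank (fun l => S (Equiv.swap i j l) ω) j = rank (fun l => S l ω) i :=
    (rank_comp_perm (fun l => S l ω) _ j).trans (by rw [Equiv.swap_apply_right])
  calc μ {ω | rank (fun l => S l ω) i ≤ k}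
      = μ ((fun ω l => S (Equiv.swap i j l) ω) ⁻¹' {f | rank f j ≤ k}) := by
        simp only [Set.preimage, Set.mem_ofPred_eq, hcomp]
    _ = μ {ω | rank (fun l => S l ω) j ≤ k} :=
        measure_preimage_perm_eq hmeas (hexch _) (measurable_rank j measurableSet_Iic)

theorem measureReal_rank_le_eq [DecidableEq ι] [IsProbabilityMeasure μ]
    (hmeas : ∀ i, Measurable (S i))
    (hexch : ∀ σ : Equiv.Perm ι,
      μ.map (fun ω i => S (σ i) ω) = μ.map (fun ω i => S i ω))
    (hdist : ∀ᵐ ω ∂μ, Function.Injective fun i => S i ω) {k : ℕ}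
    (hk : k ≤ Fintype.card ι) (j : ι) :
    μ.real {ω | rank (fun i => S i ω) j ≤ k} = k / Fintype.card ι := by
  have hE (i : ι) : MeasurableSet {ω | rank (fun l => S l ω) i ≤ k} :=
    (measurable_rank i).comp (measurable_pi_lambda _ hmeas) measurableSet_Iic
  have hsum := sum_measure_eq_of_ae_card_eq hE
    (hdist.mono fun ω hω => by simpa using card_rank_le hω hk)
  simp only [measure_rank_le_eq hmeas hexch k _ j, sum_const, card_univ, nsmul_eq_mul,
    measure_univ, mul_one] at hsum
  have hcard : (Fintype.card ι : ℝ) ≠ 0 :=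
    Nat.cast_ne_zero.mpr (Fintype.card_pos_iff.mpr ⟨j⟩).ne'
  rw [eq_div_iff hcard, mul_comm, measureReal_def]
  simpa using congrArg ENNReal.toReal hsum

end Exchangeable

end SplitConformal

open SplitConformal

/-- Split conformal marginal coverage: if `S_1, ..., S, S_{n+1}` are exchangeable
with a.s. distinct values and `q̂` is the `⌈(1-α)(n+1)⌉`-th smallest of
`S_1, ..., S_n` (taken as `+∞`, i.e. the event is all of `Ω`, if the index
exceeds `n`), then `P(S_{n+1} ≤ q̂) ≥ 1 - α`. -/
theorem split_conformal_marginal_coverage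
    {Ω : Type*} [MeasurableSpace Ω] (μ : Measure Ω) [IsProbabilityMeasure μ]
    (n : ℕ) (S : Fin (n + 1) → Ω → ℝ)
    (hmeas : ∀ i, Measurable (S i))
    (hexch : ∀ σ : Equiv.Perm (Fin (n + 1)),
      Measure.map (fun ω => fun i => S (σ i) ω) μ
        = Measure.map (fun ω => fun i => S i ω) μ)
    (hdist : ∀ᵐ ω ∂μ, Function.Injective fun i => S i ω)
    (α : ℝ) (hα : α ∈ Set.Ioo (0 : ℝ) 1) :
    1 - α ≤
      (μ {ω | if ⌈(1 - α) * (n + 1)⌉₊ ≤ n then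
          S (Fin.last n) ω ≤
            (((List.ofFn fun i : Fin n => S i.castSucc ω).insertionSort (· ≤ ·)).getD
              (⌈(1 - α) * (n + 1)⌉₊ - 1) 0)
        else True}).toReal := by
  obtain ⟨hα0, -⟩ := hα
  set k := ⌈(1 - α) * (n + 1)⌉₊
  by_cases hkn : k ≤ n
  · simp only [hkn, if_true]
    have hcover : (1 - α) * (n + 1) ≤ k := Nat.le_ceil _
    calc 1 - α ≤ k / (n + 1) := by rwa [le_div_iff₀ (by positivity)]
      _ = μ.real {ω | rank (fun i => S i ω) (Fin.last n) ≤ k} := by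
        rw [measureReal_rank_le_eq hmeas hexch hdist (by rw [Fintype.card_fin]; omega),
          Fintype.card_fin, Nat.cast_succ]
      _ ≤ _ := measureReal_mono fun ω hω => le_getD_insertionSort_of_rank_last_le 0 hkn hω
  · simp only [hkn, if_false, Set.ofPred_true, measure_univ, ENNReal.toReal_one]
    linarith
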